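/- arXiv:1410.5286 — 7 statements merged into one kernel-verified Lean document; each statement's English description precedes it below -/
import Mathlib

section
/- For every n ≥ 1, every real root y of the probabilist Hermite polynomial He_n satisfies |y| < √(4n+2). Equivalently, every root x of the physicist Hermite polynomial H_n satisfies −√(2n+1) < x < √(2n+1). -/
open Polynomial Real

lemma derivative_hermite' (n : ℕ) :
    derivative (hermite (n+1)) = (n+1 : ℤ[X]) * hermite n := by
  induction n with
  | zero => simp [hermite_one, hermite_zero]
  | succ n ih =>
    rw [hermite_succ (n+1), derivative_sub, derivative_mul, derivative_X, one_mul, ih,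
      derivative_mul, derivative_add, derivative_natCast, derivative_one, hermite_succ n]
    push_cast
    ring

lemma hermite_rec (n : ℕ) :
    hermite (n+2) = X * hermite (n+1) - (n+1 : ℤ[X]) * hermite n := by
  rw [hermite_succ (n+1), derivative_hermite']

lemma aeval_hermite_rec (n : ℕ) (x : ℝ) :
    aeval x (hermite (n+2)) = x * aeval x (hermite (n+1)) - (n+1 : ℝ) * aeval x (hermite n) := by
  rw [hermite_rec, map_sub, map_mul, map_mul, aeval_X]
  norm_num

lemma aeval_hermite_neg (n : ℕ) (x : ℝ) :
    aeval (-x) (hermite n) = (-1)^n * aeval x (hermite n) := by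
  induction n using Nat.twoStepInduction generalizing x with
  | zero => simp [hermite_zero]
  | one => simp [hermite_one]
  | more n ih1 ih2 =>
    rw [aeval_hermite_rec, aeval_hermite_rec, ih1, ih2]
    ring

lemma hermite_pos_of_big (x : ℝ) (hx : 0 < x) :
    ∀ n : ℕ, 4 * (n : ℝ) ≤ x^2 →
      0 < aeval x (hermite n) ∧
      x/2 * aeval x (hermite n) ≤ aeval x (hermite (n+1)) := by
  intro n
  induction n with
  | zero => simp [hermite_zero, hermite_one]; intro; linarith
  | succ n ih =>
    intro h
    have h' : 4 * (n : ℝ) ≤ x^2 := by push_cast at h ⊢; linarith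
    obtain ⟨hp, hi⟩ := ih h'
    have hp1 : 0 < aeval x (hermite (n+1)) := lt_of_lt_of_le (by positivity) hi
    refine ⟨hp1, ?_⟩
    rw [aeval_hermite_rec]
    have hb : ((n:ℝ)+1) * aeval x (hermite n) ≤ ((n:ℝ)+1) * (2/x * aeval x (hermite (n+1))) := by
      apply mul_le_mul_of_nonneg_left _ (by positivity)
      calc aeval x (hermite n) = 2/x * (x/2 * aeval x (hermite n)) := by field_simp
        _ ≤ 2/x * aeval x (hermite (n+1)) :=
          mul_le_mul_of_nonneg_left hi (by positivity)
    have hx2 : ((n:ℝ)+1) * (2/x) ≤ x/2 := by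
      rw [← mul_div_assoc, div_le_div_iff₀ hx (by norm_num)]
      push_cast at h
      nlinarith
    nlinarith [mul_le_mul_of_nonneg_right hx2 hp1.le]

/-- Every real root `y` of the probabilist Hermite polynomial `He_n` (`n ≥ 1`)
satisfies `|y| < √(4n+2)`; equivalently, every root `x` of the physicist Hermite
polynomial `H_n(x) = 2^{n/2} He_n(x√2)` satisfies `-√(2n+1) < x < √(2n+1)`. -/
theorem hermite_roots_bound (n : ℕ) (hn : 1 ≤ n) :
    (∀ y : ℝ, Polynomial.aeval y (Polynomial.hermite n) = 0 →
      |y| < Real.sqrt (4 * (n : ℝ) + 2)) ∧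
    (∀ x : ℝ, Polynomial.aeval (x * Real.sqrt 2) (Polynomial.hermite n) = 0 →
      -Real.sqrt (2 * (n : ℝ) + 1) < x ∧ x < Real.sqrt (2 * (n : ℝ) + 1)) := by
  have key : ∀ y : ℝ, Polynomial.aeval y (Polynomial.hermite n) = 0 →
      |y| < Real.sqrt (4 * (n : ℝ) + 2) := by
    intro y hy
    by_contra hcon
    push_neg at hcon
    have hs : (0:ℝ) < Real.sqrt (4 * (n : ℝ) + 2) := by
      apply Real.sqrt_pos.2; positivity
    have habs : 0 < |y| := lt_of_lt_of_le hs hcon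
    have hsq : 4 * (n : ℝ) + 2 ≤ |y|^2 := by
      have := Real.sq_sqrt (by positivity : (0:ℝ) ≤ 4 * (n : ℝ) + 2)
      nlinarith
    have h4 : 4 * (n : ℝ) ≤ |y|^2 := by linarith
    have hpos := (hermite_pos_of_big |y| habs n h4).1
    have : aeval |y| (hermite n) = 0 := by
      rcases abs_choice y with h | h
      · rw [h]; exact hy
      · rw [h, aeval_hermite_neg, hy, mul_zero]
    rw [this] at hpos
    exact lt_irrefl 0 hpos
  refine ⟨key, fun x hx => ?_⟩
  have h := key _ hx
  have h2 : Real.sqrt (4 * (n : ℝ) + 2) = Real.sqrt 2 * Real.sqrt (2 * (n : ℝ) + 1) := by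
    rw [← Real.sqrt_mul (by norm_num)]
    ring_nf
  rw [abs_mul, abs_of_nonneg (Real.sqrt_nonneg 2), h2, mul_comm (Real.sqrt 2)] at h
  have hlt : |x| < Real.sqrt (2 * (n : ℝ) + 1) :=
    lt_of_mul_lt_mul_right h (Real.sqrt_nonneg 2)
  exact abs_lt.1 hlt
end

section
/- For every n ≥ 1, the probabilist Hermite polynomial He_n has exactly n distinct real roots; that is, He_n has degree n and splits over ℝ with all roots simple. -/
/-!
The function `φₙ(x) = Heₙ(x) e^{-x²/2}` satisfies `φₙ' = -φₙ₊₁` (this is the recurrence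
`Heₙ₊₁ = X Heₙ - Heₙ'`), and it tends to `0` at `±∞`. If `φₙ` has `k ≥ 1` real zeros, Rolle's
theorem gives a zero of `φₙ'` between consecutive ones and one more on each of the two unbounded
intervals, so `Heₙ₊₁` has at least `k + 1` distinct real zeros. By induction `Heₙ` has `n`
distinct real roots, which for a polynomial of degree `n` is all of them, each simple.
-/

open Polynomial Filter Topology Set Finset

section Rolle

variable {f : ℝ → ℝ} {a : ℝ}

lemma exists_isLocalMax_lt_of_tendsto_atBot (hf : ContinuousOn f (Iic a))
    (hbot : Tendsto f atBot (𝓝 (f a))) {b : ℝ} (hba : b ≤ a) (hfb : f a < f b) :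
    ∃ c < a, IsLocalMax f c := by
  have hfar : ∀ᶠ x in cocompact ℝ ⊓ 𝓟 (Iic a), f x ≤ f b := by
    refine eventually_inf_principal.2 (Eventually.filter_mono cocompact_le_atBot_atTop ?_)
    exact eventually_sup.2 ⟨(hbot.eventually (ge_mem_nhds hfb)).mono fun _ h _ => h,
      (eventually_gt_atTop a).mono fun _ hx hxa => absurd hxa (not_le.2 hx)⟩
  obtain ⟨c, hca, hmax⟩ := hf.exists_isMaxOn' isClosed_Iic hba hfar
  have hca : c < a := (mem_Iic.1 hca).lt_of_ne fun h => (hmax hba).not_gt (h ▸ hfb)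
  exact ⟨c, hca, hmax.isLocalMax (Iic_mem_nhds hca)⟩

lemma exists_isLocalExtr_lt_of_tendsto_atBot (hf : ContinuousOn f (Iic a))
    (hbot : Tendsto f atBot (𝓝 (f a))) : ∃ c < a, IsLocalExtr f c := by
  have hb : a - 1 < a := sub_one_lt a
  rcases lt_trichotomy (f (a - 1)) (f a) with hlt | heq | hgt
  · obtain ⟨c, hca, hc : IsLocalMax (fun x => -f x) c⟩ :=
      exists_isLocalMax_lt_of_tendsto_atBot hf.neg hbot.neg hb.le (neg_lt_neg hlt)
    have hc' : IsLocalExtr (fun x => - -f x) c := hc.neg.isExtr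
    exact ⟨c, hca, by simpa using hc'⟩
  · obtain ⟨c, hc, hextr⟩ := exists_isLocalExtr_Ioo hb (hf.mono Icc_subset_Iic_self) heq
    exact ⟨c, hc.2, hextr⟩
  · obtain ⟨c, hca, hc : IsLocalMax f c⟩ :=
      exists_isLocalMax_lt_of_tendsto_atBot hf hbot hb.le hgt
    exact ⟨c, hca, hc.isExtr⟩

lemma exists_isLocalExtr_gt_of_tendsto_atTop (hf : ContinuousOn f (Ici a))
    (htop : Tendsto f atTop (𝓝 (f a))) : ∃ c > a, IsLocalExtr f c := by
  obtain ⟨c, hca, hc⟩ := exists_isLocalExtr_lt_of_tendsto_atBot (f := fun x => f (-x)) (a := -a)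
    (hf.comp continuousOn_neg fun x hx => mem_Ici.2 (le_neg.1 hx)) (by simpa using htop)
  rw [← neg_neg c] at hc
  refine ⟨-c, by linarith, ?_⟩
  simpa [Function.comp_def] using hc.comp_continuous continuous_neg.continuousAt

theorem card_zeros_lt_card_deriv_zeros (hf : Continuous f) (hbot : Tendsto f atBot (𝓝 0))
    (htop : Tendsto f atTop (𝓝 0)) {s t : Finset ℝ} (hs : s.Nonempty)
    (hs0 : ∀ x ∈ s, f x = 0) (ht : ∀ x, deriv f x = 0 → x ∈ t) : #s < #t := by
  set m := s.min' hs
  set M := s.max' hs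
  obtain ⟨c₁, hc₁m, hc₁⟩ := exists_isLocalExtr_lt_of_tendsto_atBot (a := m) hf.continuousOn
    (by rwa [hs0 m (s.min'_mem hs)])
  obtain ⟨c₂, hc₂M, hc₂⟩ := exists_isLocalExtr_gt_of_tendsto_atTop (a := M) hf.continuousOn
    (by rwa [hs0 M (s.max'_mem hs)])
  set u := t.filter (· ∈ Ioo m M)
  have hsu : #s ≤ #u + 1 := card_le_of_interleaved fun x hx y hy hxy _ => by
    obtain ⟨z, hz, hz0⟩ := exists_deriv_eq_zero hxy hf.continuousOn (by rw [hs0 x hx, hs0 y hy])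
    exact ⟨z, mem_filter.2 ⟨ht z hz0, (s.min'_le x hx).trans_lt hz.1,
      hz.2.trans_le (s.le_max' y hy)⟩, hz⟩
  have hc₂u : c₂ ∉ u := fun h => (mem_filter.1 h).2.2.not_gt hc₂M
  have hc₁u : c₁ ∉ insert c₂ u := by
    rw [Finset.mem_insert, not_or]
    exact ⟨(hc₁m.trans_le (s.min'_le_max' hs)).trans hc₂M |>.ne,
      fun h => (mem_filter.1 h).2.1.not_gt hc₁m⟩
  have hut : insert c₁ (insert c₂ u) ⊆ t := insert_subset (ht _ hc₁.deriv_eq_zero)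
    (insert_subset (ht _ hc₂.deriv_eq_zero) (filter_subset _ _))
  calc #s < #u + 2 := by omega
    _ = #(insert c₁ (insert c₂ u)) := by rw [card_insert_of_notMem hc₁u, card_insert_of_notMem hc₂u]
    _ ≤ #t := card_le_card hut

end Rolle

lemma tendsto_eval_mul_gaussian_cocompact (p : ℝ[X]) :
    Tendsto (fun x => p.eval x * Real.exp (-(x ^ 2 / 2))) (cocompact ℝ) (𝓝 0) := by
  have hp : (fun x => p.eval x) =O[cocompact ℝ] fun x => |x| ^ (p.natDegree : ℝ) := by
    have h := isBigO_cobounded_of_degree_le (P := p) (Q := X ^ p.natDegree)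
      (by simp [degree_le_natDegree])
    rw [Metric.cobounded_eq_cocompact] at h
    exact h.norm_right.congr_right fun x => by simp
  refine (hp.mul (Asymptotics.isBigO_refl _ _)).trans_tendsto ?_
  convert tendsto_rpow_abs_mul_exp_neg_mul_sq_cocompact one_half_pos (p.natDegree : ℝ) using 4
  ring

lemma hasDerivAt_eval_mul_gaussian (p : ℝ[X]) (x : ℝ) :
    HasDerivAt (fun x => p.eval x * Real.exp (-(x ^ 2 / 2)))
      ((derivative p - X * p).eval x * Real.exp (-(x ^ 2 / 2))) x := by
  have hq : HasDerivAt (fun x : ℝ => -(x ^ 2 / 2)) (-x) x := by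
    simpa using ((hasDerivAt_pow 2 x).div_const 2).fun_neg
  refine ((p.hasDerivAt x).fun_mul hq.exp).congr_deriv ?_
  rw [eval_sub, eval_mul, eval_X]
  ring

lemma deriv_hermite_mul_gaussian (n : ℕ) :
    deriv (fun x => ((hermite n).map (Int.castRingHom ℝ)).eval x * Real.exp (-(x ^ 2 / 2))) =
      fun x => -(((hermite (n + 1)).map (Int.castRingHom ℝ)).eval x * Real.exp (-(x ^ 2 / 2))) := by
  ext x
  rw [(hasDerivAt_eval_mul_gaussian _ x).deriv, hermite_succ]
  simp only [Polynomial.map_sub, Polynomial.map_mul, Polynomial.map_X, derivative_map, eval_sub]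
  ring

lemma le_card_roots_toFinset_map_hermite (n : ℕ) :
    n ≤ #((hermite n).map (Int.castRingHom ℝ)).roots.toFinset := by
  have mem_roots (m : ℕ) (x : ℝ) : x ∈ ((hermite m).map (Int.castRingHom ℝ)).roots.toFinset ↔
      ((hermite m).map (Int.castRingHom ℝ)).eval x = 0 := by
    simp [((hermite_monic m).map _).ne_zero]
  induction n with
  | zero => exact Nat.zero_le _
  | succ n ih =>
    rcases n.eq_zero_or_pos with rfl | hn
    · simp
    refine ih.trans_lt (card_zeros_lt_card_deriv_zeros
      (f := fun x => ((hermite n).map (Int.castRingHom ℝ)).eval x * Real.exp (-(x ^ 2 / 2)))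
      (by fun_prop)
      ((tendsto_eval_mul_gaussian_cocompact _).mono_left atBot_le_cocompact)
      ((tendsto_eval_mul_gaussian_cocompact _).mono_left atTop_le_cocompact)
      (card_pos.1 (hn.trans_le ih)) (fun x hx => ?_) (fun x hx => ?_))
    · rw [(mem_roots n x).1 hx, zero_mul]
    · rw [deriv_hermite_mul_gaussian, neg_eq_zero, mul_eq_zero] at hx
      exact (mem_roots (n + 1) x).2 (hx.resolve_right (Real.exp_ne_zero _))

theorem hermite_real_roots_simple_general (n : ℕ) :
    ((Polynomial.hermite n).map (Int.castRingHom ℝ)).natDegree = n ∧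
    Polynomial.Splits ((Polynomial.hermite n).map (Int.castRingHom ℝ)) ∧
    ((Polynomial.hermite n).map (Int.castRingHom ℝ)).roots.Nodup ∧
    Multiset.card ((Polynomial.hermite n).map (Int.castRingHom ℝ)).roots = n := by
  set P := (hermite n).map (Int.castRingHom ℝ)
  have hdeg : P.natDegree = n := by rw [(hermite_monic n).natDegree_map, natDegree_hermite]
  have hcard : Multiset.card P.roots = n :=
    le_antisymm (hdeg ▸ P.card_roots')
      ((le_card_roots_toFinset_map_hermite n).trans (Multiset.toFinset_card_le _))
  refine ⟨hdeg, splits_iff_card_roots.2 (hcard.trans hdeg.symm), ?_, hcard⟩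
  exact Multiset.toFinset_card_eq_card_iff_nodup.1
    (le_antisymm (Multiset.toFinset_card_le _) (hcard ▸ le_card_roots_toFinset_map_hermite n))

/-- For `n ≥ 1`, the probabilist Hermite polynomial `He_n`, viewed as a real
polynomial, has degree `n`, splits over `ℝ`, and has exactly `n` distinct real
roots (all roots are simple). -/
theorem hermite_real_roots_simple (n : ℕ) (hn : 1 ≤ n) :
    ((Polynomial.hermite n).map (Int.castRingHom ℝ)).natDegree = n ∧
    Polynomial.Splits ((Polynomial.hermite n).map (Int.castRingHom ℝ)) ∧
    ((Polynomial.hermite n).map (Int.castRingHom ℝ)).roots.Nodup ∧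
    Multiset.card ((Polynomial.hermite n).map (Int.castRingHom ℝ)).roots = n :=
  hermite_real_roots_simple_general n
end

section
/- Let n ≥ 1, let x_1 < x_2 < ⋯ < x_n be the n distinct real roots of the probabilist Hermite polynomial He_n, and define the weights w_k = n!·√(2π) / (He_n′(x_k))², where He_n′ is the derivative of He_n. Then for every polynomial p with real coefficients of degree at most 2n − 1, ∫_{−∞}^{∞} p(x)·e^{−x²/2} dx = Σ_{k=1}^{n} w_k·p(x_k). -/
open Polynomial Real MeasureTheory

/-!
Integrating by parts against `e^{-t²/2}` gives `∫ P·He_{j+1} = ∫ P'·He_j`, hence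
`∫ P·He_n = ∫ P⁽ⁿ⁾`: `He_n` is orthogonal to every polynomial of degree `< n` and pairs with a
monic polynomial of degree `n` to `n!·√(2π)`. As `He_n` is monic with the `n` distinct roots
`x_k`, it is their nodal polynomial; dividing `p` by `He_n` and interpolating the remainder at the
nodes turns `∫ p e^{-t²/2}` into `∑ λ_k p(x_k)`, where `λ_k` is the integral of the `k`-th
Lagrange basis polynomial. This exact rule, applied to `(He_n / (X - x_k))·He_n'` of degree
`2n - 2`, isolates `λ_k·He_n'(x_k)²`, while integration by parts evaluates the same integral to
`n!·√(2π)`.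
-/

namespace Polynomial

theorem iterate_derivative_natDegree {R : Type*} [Semiring R] (p : R[X]) :
    derivative^[p.natDegree] p = C (p.natDegree.factorial * p.leadingCoeff) := by
  have hdeg : (derivative^[p.natDegree] p).natDegree = 0 :=
    Nat.le_zero.mp ((natDegree_iterate_derivative p _).trans (Nat.sub_self _).le)
  rw [eq_C_of_natDegree_eq_zero hdeg, coeff_iterate_derivative, zero_add,
    Nat.descFactorial_self, nsmul_eq_mul, leadingCoeff]

end Polynomial

namespace Lagrange

variable {F ι : Type*} [Field F] {s : Finset ι} {v : ι → F}

open Finset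

theorem eq_nodal_of_monic {f : F[X]} (hvs : Set.InjOn v s) (hf : f.Monic)
    (hdeg : f.natDegree = #s) (heval : ∀ i ∈ s, f.eval (v i) = 0) : f = nodal s v := by
  refine eq_of_degree_le_of_eval_index_eq s hvs ?_ ?_ ?_ fun i hi => ?_
  · rw [degree_eq_natDegree hf.ne_zero, hdeg]
  · rw [degree_eq_natDegree hf.ne_zero, hdeg, degree_nodal]
  · rw [hf.leadingCoeff, nodal_monic.leadingCoeff]
  · rw [heval i hi, eval_nodal_at_node hi]

variable [DecidableEq ι] (L : F[X] →ₗ[F] F)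

theorem apply_eq_sum_apply_basis_mul_eval (hvs : Set.InjOn v s)
    (horth : ∀ q : F[X], q.natDegree < #s → L (q * nodal s v) = 0) {p : F[X]}
    (hp : p.natDegree < 2 * #s) :
    L p = ∑ i ∈ s, L (Lagrange.basis s v i) * p.eval (v i) := by
  have hrem : p %ₘ nodal s v = interpolate s v fun i => p.eval (v i) := by
    refine eq_interpolate_of_eval_eq _ hvs ?_ fun i hi => ?_
    · simpa only [degree_nodal] using degree_modByMonic_lt p nodal_monic
    · conv_rhs => rw [← modByMonic_add_div p (nodal s v)]
      rw [eval_add, eval_mul, eval_nodal_at_node hi, zero_mul, add_zero]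
  have hquot : L (nodal s v * (p /ₘ nodal s v)) = 0 := by
    rw [mul_comm]
    refine horth _ ?_
    rw [natDegree_divByMonic p nodal_monic, natDegree_nodal]
    omega
  have hL : L p = L (p %ₘ nodal s v) := by
    conv_lhs => rw [← modByMonic_add_div p (nodal s v)]
    rw [map_add, hquot, add_zero]
  rw [hL, hrem, interpolate_apply, map_sum]
  refine sum_congr rfl fun i _ => ?_
  rw [← smul_eq_C_mul, map_smul, smul_eq_mul, mul_comm]

theorem apply_basis_mul_eval_derivative_nodal_sq (hvs : Set.InjOn v s)
    (horth : ∀ q : F[X], q.natDegree < #s → L (q * nodal s v) = 0) {i : ι} (hi : i ∈ s) :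
    L (Lagrange.basis s v i) * (eval (v i) (derivative (nodal s v))) ^ 2 =
      L (nodal (s.erase i) v * derivative (nodal s v)) := by
  have hdeg : (nodal (s.erase i) v * derivative (nodal s v)).natDegree < 2 * #s := by
    refine (natDegree_mul_le).trans_lt ?_
    have hder := natDegree_derivative_le (nodal s v)
    have hcard := card_pos.mpr ⟨i, hi⟩
    rw [natDegree_nodal] at hder
    rw [natDegree_nodal, card_erase_of_mem hi]
    omega
  rw [apply_eq_sum_apply_basis_mul_eval L hvs horth hdeg, sum_eq_single_of_mem i hi]
  · rw [eval_mul, ← eval_nodal_derivative_eval_node_eq hi]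
    ring
  · intro j hj hji
    rw [eval_mul, eval_nodal_at_node (mem_erase.mpr ⟨hji, hj⟩), zero_mul, mul_zero]

end Lagrange

theorem integrable_eval_mul_exp_neg_sq_div_two (P : ℝ[X]) :
    Integrable fun t : ℝ => P.eval t * exp (-t ^ 2 / 2) := by
  induction P using Polynomial.induction_on' with
  | add P Q hP hQ =>
    simp only [eval_add, add_mul]
    exact hP.add hQ
  | monomial k a =>
    have hk := integrable_rpow_mul_exp_neg_mul_sq (b := 1 / 2) (by norm_num)
      (s := k) (by linarith [k.cast_nonneg (α := ℝ)])
    refine (hk.const_mul a).congr (Filter.Eventually.of_forall fun t => ?_)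
    simp only [eval_monomial, rpow_natCast]
    ring_nf

noncomputable def gaussianIntegral : ℝ[X] →ₗ[ℝ] ℝ where
  toFun P := ∫ t, P.eval t * exp (-t ^ 2 / 2)
  map_add' P Q := by
    simp only [eval_add, add_mul]
    exact integral_add (integrable_eval_mul_exp_neg_sq_div_two P)
      (integrable_eval_mul_exp_neg_sq_div_two Q)
  map_smul' c P := by
    simp only [eval_smul, smul_eq_mul, mul_assoc, RingHom.id_apply]
    exact integral_const_mul c _

theorem gaussianIntegral_apply (P : ℝ[X]) :
    gaussianIntegral P = ∫ t, P.eval t * exp (-t ^ 2 / 2) := rfl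

theorem gaussianIntegral_C (c : ℝ) : gaussianIntegral (C c) = c * √(2 * π) := by
  have hgauss := integral_gaussian (1 / 2)
  rw [show π / (1 / 2) = 2 * π by ring] at hgauss
  rw [← hgauss, ← integral_const_mul, gaussianIntegral_apply]
  congr 1 with t
  rw [eval_C]
  ring_nf

theorem gaussianIntegral_derivative (P : ℝ[X]) :
    gaussianIntegral (derivative P) = gaussianIntegral (X * P) := by
  rw [← sub_eq_zero, ← map_sub, gaussianIntegral_apply]
  refine integral_eq_zero_of_hasDerivAt_of_integrable (fun t => ?_)
    (integrable_eval_mul_exp_neg_sq_div_two _) (integrable_eval_mul_exp_neg_sq_div_two P)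
  have hexponent : HasDerivAt (fun t : ℝ => -t ^ 2 / 2) (-t) t :=
    ((hasDerivAt_pow 2 t).neg.div_const 2).congr_deriv (by ring)
  refine ((P.hasDerivAt t).mul hexponent.exp).congr_deriv ?_
  simp only [eval_sub, eval_mul, eval_X]
  ring

noncomputable def He (n : ℕ) : ℝ[X] := (hermite n).map (Int.castRingHom ℝ)

theorem He_zero : He 0 = 1 := by simp [He]

theorem He_succ (n : ℕ) : He (n + 1) = X * He n - derivative (He n) := by
  simp [He, hermite_succ, derivative_map]

theorem He_monic (n : ℕ) : (He n).Monic := (hermite_monic n).map _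

theorem natDegree_He (n : ℕ) : (He n).natDegree = n := by
  rw [He, (hermite_monic n).natDegree_map, natDegree_hermite]

theorem eval_He (n : ℕ) (y : ℝ) : (He n).eval y = aeval y (hermite n) := by
  rw [He, eval_map, aeval_def, algebraMap_int_eq]

theorem gaussianIntegral_mul_He_succ (P : ℝ[X]) (n : ℕ) :
    gaussianIntegral (P * He (n + 1)) = gaussianIntegral (derivative P * He n) := by
  have hparts := gaussianIntegral_derivative (P * He n)
  rw [derivative_mul, map_add] at hparts
  rw [He_succ, show P * (X * He n - derivative (He n)) = X * (P * He n) - P * derivative (He n)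
    by ring, map_sub, ← hparts]
  ring

theorem gaussianIntegral_mul_He (P : ℝ[X]) (n : ℕ) :
    gaussianIntegral (P * He n) = gaussianIntegral (derivative^[n] P) := by
  induction n generalizing P with
  | zero => rw [He_zero, mul_one, Function.iterate_zero_apply]
  | succ n ih => rw [gaussianIntegral_mul_He_succ, ih, Function.iterate_succ_apply]

theorem gaussianIntegral_mul_He_of_natDegree_lt {P : ℝ[X]} {n : ℕ} (hP : P.natDegree < n) :
    gaussianIntegral (P * He n) = 0 := by
  rw [gaussianIntegral_mul_He, iterate_derivative_eq_zero hP, map_zero]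

theorem gaussianIntegral_mul_He_of_monic {P : ℝ[X]} {n : ℕ} (hP : P.Monic)
    (hdeg : P.natDegree = n) : gaussianIntegral (P * He n) = n.factorial * √(2 * π) := by
  rw [gaussianIntegral_mul_He, ← hdeg, iterate_derivative_natDegree, hP.leadingCoeff, mul_one,
    gaussianIntegral_C]

theorem gaussianIntegral_mul_derivative_He {P : ℝ[X]} {n : ℕ} (hP : P.Monic)
    (hdeg : P.natDegree + 1 = n) :
    gaussianIntegral (P * derivative (He n)) = n.factorial * √(2 * π) := by
  have hparts := gaussianIntegral_derivative (P * He n)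
  rw [derivative_mul, map_add, gaussianIntegral_mul_He_of_natDegree_lt, zero_add] at hparts
  · rw [hparts, ← mul_assoc, gaussianIntegral_mul_He_of_monic (monic_X.mul hP)]
    rw [natDegree_X_mul hP.ne_zero, hdeg]
  · exact (natDegree_derivative_le P).trans_lt (by omega)

theorem gauss_hermite_quadrature_general (n : ℕ) (hn : 1 ≤ n)
    (x : Fin n → ℝ) (hmono : StrictMono x)
    (hroot : ∀ k : Fin n, Polynomial.aeval (x k) (Polynomial.hermite n) = 0)
    (w : Fin n → ℝ)
    (hw : ∀ k : Fin n, w k =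
      (Nat.factorial n : ℝ) * Real.sqrt (2 * π) /
        (Polynomial.eval (x k)
          (Polynomial.derivative ((Polynomial.hermite n).map (Int.castRingHom ℝ)))) ^ 2) :
    ∀ p : Polynomial ℝ, p.natDegree ≤ 2 * n - 1 →
      ∫ t : ℝ, Polynomial.eval t p * Real.exp (-t ^ 2 / 2) =
        ∑ k : Fin n, w k * Polynomial.eval (x k) p := by
  intro p hp
  have hinj : Set.InjOn x (Finset.univ : Finset (Fin n)) := hmono.injective.injOn
  have hnodal : He n = Lagrange.nodal Finset.univ x :=
    Lagrange.eq_nodal_of_monic hinj (He_monic n) (by simp [natDegree_He])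
      fun k _ => by rw [eval_He, hroot k]
  have horth (q : ℝ[X]) (hq : q.natDegree < (Finset.univ : Finset (Fin n)).card) :
      gaussianIntegral (q * Lagrange.nodal Finset.univ x) = 0 := by
    rw [← hnodal]
    exact gaussianIntegral_mul_He_of_natDegree_lt (by simpa using hq)
  rw [← gaussianIntegral_apply,
    Lagrange.apply_eq_sum_apply_basis_mul_eval _ hinj horth
      (by rw [Finset.card_univ, Fintype.card_fin]; omega)]
  refine Finset.sum_congr rfl fun k hk => congrArg (· * _) ?_
  have hweight := Lagrange.apply_basis_mul_eval_derivative_nodal_sq _ hinj horth hk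
  rw [← hnodal, gaussianIntegral_mul_derivative_He Lagrange.nodal_monic
    (by rw [Lagrange.natDegree_nodal, Finset.card_erase_of_mem hk, Finset.card_univ,
      Fintype.card_fin]; omega)] at hweight
  rw [hw k]
  have hpos : (0 : ℝ) < n.factorial * √(2 * π) := by positivity
  exact eq_div_of_mul_eq (right_ne_zero_of_mul (hweight ▸ hpos.ne')) hweight

/-- **Gauss–Hermite quadrature (probabilist normalization).**
Let `x 0 < ⋯ < x (n-1)` be the `n` distinct real roots of the probabilist Hermite
polynomial `He_n` and let `w k = n!·√(2π) / He_n′(x k)²`.  Then the `n`-point rule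
with these nodes and weights integrates exactly every real polynomial of degree
at most `2n - 1` against the weight `e^{-x²/2}`. -/
theorem gauss_hermite_quadrature (n : ℕ) (hn : 1 ≤ n)
    (x : Fin n → ℝ) (hmono : StrictMono x)
    (hroot : ∀ k : Fin n, Polynomial.aeval (x k) (Polynomial.hermite n) = 0)
    (hall : ∀ y : ℝ, Polynomial.aeval y (Polynomial.hermite n) = 0 → ∃ k : Fin n, y = x k)
    (w : Fin n → ℝ)
    (hw : ∀ k : Fin n, w k =
      (Nat.factorial n : ℝ) * Real.sqrt (2 * π) /
        (Polynomial.eval (x k)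
          (Polynomial.derivative ((Polynomial.hermite n).map (Int.castRingHom ℝ)))) ^ 2) :
    ∀ p : Polynomial ℝ, p.natDegree ≤ 2 * n - 1 →
      ∫ t : ℝ, Polynomial.eval t p * Real.exp (-t ^ 2 / 2) =
        ∑ k : Fin n, w k * Polynomial.eval (x k) p :=
  gauss_hermite_quadrature_general n hn x hmono hroot w hw
end

section
/- Let w : ℝ → ℝ be a measurable function with w(x) ≥ 0 for all x, such that ∫ |x|^k w(x) dx < ∞ for every integer k ≥ 0 and the set {x : w(x) > 0} has positive Lebesgue measure. Let p be a monic real polynomial of degree n ≥ 1 with ∫ p(x)·q(x)·w(x) dx = 0 for every polynomial q of degree < n, and let x_1 < ⋯ < x_n be its n distinct real roots. Then there exist strictly positive real numbers w_1, …, w_n such that ∫ f(x)·w(x) dx = Σ_{k=1}^{n} w_k·f(x_k) for every polynomial f of degree at most 2n − 1. -/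
/-!
By Lagrange interpolation at the roots `xᵢ` of `p`, the functional `f ↦ ∫ f w` agrees on
polynomials of degree `< n` with the rule whose weights are its values on the Lagrange basis `Lᵢ`.
For `deg f < 2n` write `f = p q + r` with `deg q, deg r < n`: the term `p q` integrates to zero by
orthogonality and vanishes at the nodes, so the rule is exact on `f`. Exactness on `Lᵢ²` then
gives `wᵢ = ∫ Lᵢ² w > 0`.
-/

open Polynomial MeasureTheory Finset

namespace LinearMap

variable {K ι : Type*} [Field K] [DecidableEq ι] (φ : K[X] →ₗ[K] K) {s : Finset ι}
  {x : ι → K}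

theorem eq_sum_eval_mul_basis_of_degree_lt (hx : Set.InjOn x s) {r : K[X]}
    (hr : r.degree < #s) : φ r = ∑ i ∈ s, r.eval (x i) * φ (Lagrange.basis s x i) := by
  conv_lhs => rw [Lagrange.eq_interpolate hx hr, Lagrange.interpolate_apply]
  simp only [map_sum, ← smul_eq_C_mul, map_smul, smul_eq_mul]

variable {p : K[X]}

theorem eq_sum_eval_mul_basis_of_natDegree_lt_two_mul (hx : Set.InjOn x s) (hp : p.Monic)
    (hpdeg : p.natDegree = #s) (hroot : ∀ i ∈ s, p.eval (x i) = 0)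
    (horth : ∀ q : K[X], q.degree < #s → φ (p * q) = 0) {f : K[X]}
    (hf : f.natDegree < 2 * #s) :
    φ f = ∑ i ∈ s, f.eval (x i) * φ (Lagrange.basis s x i) := by
  have hquot : (f /ₘ p).degree < #s := by
    rcases eq_or_ne (f /ₘ p) 0 with h | h
    · rw [h, degree_zero]
      exact WithBot.bot_lt_coe _
    · rw [degree_eq_natDegree h, Nat.cast_lt, natDegree_divByMonic f hp, hpdeg]
      omega
  have hrem : (f %ₘ p).degree < #s := by
    rw [← hpdeg, ← degree_eq_natDegree hp.ne_zero]
    exact degree_modByMonic_lt f hp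
  have heval : ∀ i ∈ s, (f %ₘ p).eval (x i) = f.eval (x i) := fun i hi => by
    rw [modByMonic_eq_sub_mul_div, eval_sub, eval_mul, hroot i hi, zero_mul, sub_zero]
  calc φ f = φ (f %ₘ p) + φ (p * (f /ₘ p)) := by rw [← map_add, modByMonic_add_div]
    _ = φ (f %ₘ p) := by rw [horth _ hquot, add_zero]
    _ = ∑ i ∈ s, f.eval (x i) * φ (Lagrange.basis s x i) := by
      rw [φ.eq_sum_eval_mul_basis_of_degree_lt hx hrem]
      exact sum_congr rfl fun i hi => by rw [heval i hi]

theorem apply_basis_eq_apply_basis_sq (hx : Set.InjOn x s) (hp : p.Monic)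
    (hpdeg : p.natDegree = #s) (hroot : ∀ i ∈ s, p.eval (x i) = 0)
    (horth : ∀ q : K[X], q.degree < #s → φ (p * q) = 0) {i : ι} (hi : i ∈ s) :
    φ (Lagrange.basis s x i) = φ (Lagrange.basis s x i ^ 2) := by
  have hdeg : (Lagrange.basis s x i ^ 2).natDegree < 2 * #s := by
    rw [natDegree_pow, Lagrange.natDegree_basis hx hi]
    have := card_pos.mpr ⟨i, hi⟩
    omega
  rw [φ.eq_sum_eval_mul_basis_of_natDegree_lt_two_mul hx hp hpdeg hroot horth hdeg,
    sum_eq_single_of_mem i hi fun j hj hji => by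
      rw [eval_pow, Lagrange.eval_basis_of_ne hji.symm hj, zero_pow two_ne_zero, zero_mul],
    eval_pow, Lagrange.eval_basis_self hx hi, one_pow, one_mul]

end LinearMap

section WeightedIntegral

variable {μ : Measure ℝ} {w : ℝ → ℝ}

theorem integrable_eval_mul_of_integrable_abs_pow_mul
    (hw : ∀ k : ℕ, Integrable (fun t => |t| ^ k * w t) μ) (q : ℝ[X]) :
    Integrable (fun t => q.eval t * w t) μ := by
  have hw_meas : AEStronglyMeasurable w μ := by simpa using (hw 0).aestronglyMeasurable
  have hpow : ∀ k : ℕ, Integrable (fun t => t ^ k * w t) μ := fun k =>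
    (hw k).mono ((continuous_pow k).aestronglyMeasurable.mul hw_meas)
      (ae_of_all _ fun t => by simp only [norm_mul, norm_pow, Real.norm_eq_abs, abs_abs, le_refl])
  have hsum : (fun t => q.eval t * w t) =
      fun t => ∑ i ∈ range (q.natDegree + 1), q.coeff i * (t ^ i * w t) := by
    funext t
    rw [eval_eq_sum_range, sum_mul]
    exact sum_congr rfl fun i _ => mul_assoc _ _ _
  rw [hsum]
  exact integrable_finsetSum _ fun i _ => (hpow i).const_mul _

noncomputable def weightedIntegral (hw : ∀ k : ℕ, Integrable (fun t => |t| ^ k * w t) μ) :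
    ℝ[X] →ₗ[ℝ] ℝ where
  toFun q := ∫ t, q.eval t * w t ∂μ
  map_add' q r := by
    simp only [eval_add, add_mul]
    exact integral_add (integrable_eval_mul_of_integrable_abs_pow_mul hw q)
      (integrable_eval_mul_of_integrable_abs_pow_mul hw r)
  map_smul' c q := by
    simp only [eval_smul, smul_eq_mul, mul_assoc, integral_const_mul, RingHom.id_apply]

theorem weightedIntegral_apply (hw : ∀ k : ℕ, Integrable (fun t => |t| ^ k * w t) μ)
    (q : ℝ[X]) : weightedIntegral hw q = ∫ t, q.eval t * w t ∂μ :=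
  rfl

theorem weightedIntegral_sq_pos [NullSingletonClass μ]
    (hw : ∀ k : ℕ, Integrable (fun t => |t| ^ k * w t) μ)
    (hnonneg : ∀ t, 0 ≤ w t) (hpos : 0 < μ {t | 0 < w t}) {q : ℝ[X]} (hq : q ≠ 0) :
    0 < weightedIntegral hw (q ^ 2) := by
  have hnn : 0 ≤ fun t => (q ^ 2).eval t * w t := fun t =>
    mul_nonneg (by rw [eval_pow]; exact sq_nonneg _) (hnonneg t)
  rw [weightedIntegral_apply, integral_pos_iff_support_of_nonneg hnn
    (integrable_eval_mul_of_integrable_abs_pow_mul hw _)]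
  have hsupp :
      {t | 0 < w t} \ {t | q.IsRoot t} ⊆ Function.support fun t => (q ^ 2).eval t * w t :=
    fun t ⟨hwt, hqt⟩ => mul_ne_zero (by rw [eval_pow]; exact pow_ne_zero _ hqt) hwt.ne'
  refine hpos.trans_le (le_of_eq_of_le ?_ (measure_mono hsupp))
  rw [measure_sdiff_null ((finite_setOfPred_isRoot hq).measure_zero μ)]

end WeightedIntegral

theorem gauss_quadrature_exists_general
    (w : ℝ → ℝ) (hnonneg : ∀ x, 0 ≤ w x)
    (hmom : ∀ k : ℕ, Integrable (fun x : ℝ => |x| ^ k * w x))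
    (hpos : 0 < volume {x : ℝ | 0 < w x})
    (n : ℕ) (hn : 1 ≤ n) (p : Polynomial ℝ) (hmonic : p.Monic) (hdeg : p.natDegree = n)
    (horth : ∀ q : Polynomial ℝ, q.degree < (n : ℕ) →
      ∫ x : ℝ, Polynomial.eval x p * Polynomial.eval x q * w x = 0)
    (x : Fin n → ℝ) (hx : StrictMono x)
    (hroot : ∀ k : Fin n, Polynomial.eval (x k) p = 0) :
    ∃ w' : Fin n → ℝ, (∀ k, 0 < w' k) ∧
      ∀ f : Polynomial ℝ, f.natDegree ≤ 2 * n - 1 →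
        ∫ t : ℝ, Polynomial.eval t f * w t = ∑ k : Fin n, w' k * Polynomial.eval (x k) f := by
  set φ := weightedIntegral hmom
  have hinj : Set.InjOn x (univ : Finset (Fin n)) := hx.injective.injOn
  have hcard : p.natDegree = #(univ : Finset (Fin n)) := by rw [card_univ, Fintype.card_fin, hdeg]
  have horth' : ∀ q : ℝ[X], q.degree < #(univ : Finset (Fin n)) → φ (p * q) = 0 :=
    fun q hq => by
      rw [weightedIntegral_apply, ← horth q (by simpa using hq)]
      simp only [eval_mul]
  refine ⟨fun k => φ (Lagrange.basis univ x k), fun k => ?_, fun f hf => ?_⟩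
  · dsimp only
    rw [φ.apply_basis_eq_apply_basis_sq hinj hmonic hcard (fun k _ => hroot k) horth' (mem_univ k)]
    exact weightedIntegral_sq_pos hmom hnonneg hpos (Lagrange.basis_ne_zero hinj (mem_univ k))
  · rw [← weightedIntegral_apply hmom,
      φ.eq_sum_eval_mul_basis_of_natDegree_lt_two_mul hinj hmonic hcard (fun k _ => hroot k) horth'
        (by rw [card_univ, Fintype.card_fin]; omega)]
    simp only [mul_comm]

/-- **Existence of a Gauss quadrature rule with positive weights.**
Let `w ≥ 0` be a measurable weight on `ℝ` with all moments finite, positive on a set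
of positive Lebesgue measure.  Let `p` be a monic real polynomial of degree `n ≥ 1`
orthogonal to all polynomials of degree `< n` with respect to `w`, with distinct real
roots `x 0 < ⋯ < x (n-1)`.  Then there are strictly positive weights `w' k` with
`∫ f(x) w(x) dx = ∑ k, w' k * f (x k)` for every polynomial `f` of degree `≤ 2n - 1`. -/
theorem gauss_quadrature_exists
    (w : ℝ → ℝ) (hmeas : Measurable w) (hnonneg : ∀ x, 0 ≤ w x)
    (hmom : ∀ k : ℕ, Integrable (fun x : ℝ => |x| ^ k * w x))
    (hpos : 0 < volume {x : ℝ | 0 < w x})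
    (n : ℕ) (hn : 1 ≤ n) (p : Polynomial ℝ) (hmonic : p.Monic) (hdeg : p.natDegree = n)
    (horth : ∀ q : Polynomial ℝ, q.degree < (n : ℕ) →
      ∫ x : ℝ, Polynomial.eval x p * Polynomial.eval x q * w x = 0)
    (x : Fin n → ℝ) (hx : StrictMono x)
    (hroot : ∀ k : Fin n, Polynomial.eval (x k) p = 0)
    (hall : ∀ y : ℝ, Polynomial.eval y p = 0 → ∃ k : Fin n, y = x k) :
    ∃ w' : Fin n → ℝ, (∀ k, 0 < w' k) ∧
      ∀ f : Polynomial ℝ, f.natDegree ≤ 2 * n - 1 →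
        ∫ t : ℝ, Polynomial.eval t f * w t = ∑ k : Fin n, w' k * Polynomial.eval (x k) f :=
  gauss_quadrature_exists_general w hnonneg hmom hpos n hn p hmonic hdeg horth x hx hroot
end

section
/- For every n ≥ 2, the n-tuple consisting of the n distinct real roots of the probabilist Hermite polynomial He_n is a global minimizer of the energy E(x_1, …, x_n) = Σ_{1 ≤ i < j ≤ n} log(1/|x_i − x_j|) + (1/4)·Σ_{i=1}^{n} x_i² over all n-tuples (x_1, …, x_n) of pairwise distinct real numbers. -/
/-!
Stieltjes' argument. On tuples with distinct coordinates the energy equals `-¼ log` of the weight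
`∏_{i ≠ j} (x_i - x_j)² · exp (-∑ x_i²)`, which is continuous on all of `ℝⁿ`, vanishes on
coincidences and decays at infinity; so it attains a global maximum, at some `z` with distinct
coordinates. As a function of one coordinate the weight is `c · q(t)⁴ e^{-t²}` with
`q = ∏_{j ≠ i} (X - z_j)`, and Fermat's rule gives `2 q'(z_i) = z_i q(z_i)`. For
`p = ∏ (X - z_j)` this says that `p'' - X p' + n p`, of degree `< n`, vanishes at the `n` points
`z_i`, hence is zero, and `He_n` is the only monic solution of degree `n` of this Hermite equation.
So the maximizer is a permutation of the roots `r`, which therefore minimize the energy.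
-/

open Polynomial Real Finset Filter Topology

namespace Polynomial

variable {R : Type*} [CommRing R]

theorem derivative_hermite_succ (n : ℕ) :
    derivative (hermite (n + 1)) = (n + 1 : ℤ[X]) * hermite n := by
  induction n with
  | zero => simp
  | succ n ih =>
    rw [hermite_succ (n + 1), derivative_sub, derivative_mul, derivative_X, one_mul, ih,
      derivative_mul, hermite_succ n]
    simp only [derivative_add, derivative_natCast, derivative_one]
    push_cast
    ring

noncomputable def hermiteOp (n : ℕ) (q : R[X]) : R[X] :=
  derivative (derivative q) - X * derivative q + (n : R[X]) * q

theorem hermiteOp_sub (n : ℕ) (p q : R[X]) :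
    hermiteOp n (p - q) = hermiteOp n p - hermiteOp n q := by
  simp only [hermiteOp, derivative_sub]
  ring

theorem map_hermiteOp {S : Type*} [CommRing S] (f : R →+* S) (n : ℕ) (q : R[X]) :
    (hermiteOp n q).map f = hermiteOp n (q.map f) := by
  simp [hermiteOp, derivative_map]

theorem hermiteOp_hermite (n : ℕ) : hermiteOp n (hermite n) = 0 := by
  rcases n with _ | n
  · simp [hermiteOp]
  rw [hermiteOp, derivative_hermite_succ, derivative_mul]
  rcases n with _ | n
  · simp
  rw [derivative_hermite_succ, hermite_succ (n + 1), derivative_hermite_succ]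
  simp only [derivative_add, derivative_natCast, derivative_one]
  push_cast
  ring

theorem hermiteOp_map_hermite (n : ℕ) :
    hermiteOp n ((hermite n).map (Int.castRingHom R)) = 0 := by
  rw [← map_hermiteOp, hermiteOp_hermite, Polynomial.map_zero]

theorem coeff_hermiteOp (n k : ℕ) (q : R[X]) :
    (hermiteOp n q).coeff k = (k + 1) * (k + 2) * q.coeff (k + 2) + (n - k) * q.coeff k := by
  rcases k with _ | k
  · simp only [hermiteOp, coeff_add, coeff_sub, coeff_derivative, mul_coeff_zero, coeff_X_zero,
      coeff_natCast_ite, zero_mul, sub_zero]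
    push_cast
    ring
  · simp only [hermiteOp, coeff_add, coeff_sub, coeff_X_mul, coeff_derivative, coeff_natCast_mul]
    push_cast
    ring

theorem degree_hermiteOp_lt {n : ℕ} {q : R[X]} (hq : q.natDegree ≤ n) :
    (hermiteOp n q).degree < n := by
  refine (degree_lt_iff_coeff_zero _ _).2 fun k hk => ?_
  rw [coeff_hermiteOp, coeff_eq_zero_of_natDegree_lt (by omega : q.natDegree < k + 2)]
  rcases hk.eq_or_lt with rfl | hk
  · simp
  · simp [coeff_eq_zero_of_natDegree_lt (hq.trans_lt hk)]

theorem eq_zero_of_hermiteOp_eq_zero [IsDomain R] [CharZero R] {n : ℕ} {q : R[X]}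
    (h : hermiteOp n q = 0) (hq : q.degree < n) : q = 0 := by
  by_contra hq0
  have hlt : q.natDegree < n := (natDegree_lt_iff_degree_lt hq0).2 hq
  have hcoeff := congrArg (coeff · q.natDegree) h
  simp only [coeff_hermiteOp, coeff_zero,
    coeff_eq_zero_of_natDegree_lt (by omega : q.natDegree < q.natDegree + 2), mul_zero,
    zero_add, mul_eq_zero, sub_eq_zero, Nat.cast_inj, coeff_natDegree,
    leadingCoeff_eq_zero] at hcoeff
  exact hcoeff.elim (by omega) hq0

theorem eq_hermite_of_hermiteOp_eq_zero [IsDomain R] [CharZero R] {n : ℕ} {q : R[X]}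
    (hq : q.Monic) (hdeg : q.natDegree = n) (h : hermiteOp n q = 0) :
    q = (hermite n).map (Int.castRingHom R) := by
  have hH : ((hermite n).map (Int.castRingHom R)).Monic := (hermite_monic n).map _
  have hqdeg : q.degree = n := (degree_eq_iff_natDegree_eq hq.ne_zero).2 hdeg
  refine sub_eq_zero.1 (eq_zero_of_hermiteOp_eq_zero (n := n) ?_ ?_)
  · rw [hermiteOp_sub, h, hermiteOp_map_hermite, sub_zero]
  · refine hqdeg ▸ degree_sub_lt_left ?_ hq.ne_zero (by rw [hq.leadingCoeff, hH.leadingCoeff])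
    rw [hqdeg, (hermite_monic n).degree_map, degree_hermite]

theorem eval_hermiteOp_X_sub_C_mul (n : ℕ) (a : R) (q : R[X]) :
    (hermiteOp n ((X - C a) * q)).eval a = 2 * (derivative q).eval a - a * q.eval a := by
  simp only [hermiteOp, derivative_mul, derivative_sub, derivative_X, derivative_C, derivative_add,
    derivative_one, derivative_zero, eval_add, eval_sub, eval_mul, eval_X, eval_C, eval_natCast,
    eval_one, eval_zero]
  ring

theorem prod_X_sub_C_eq_hermite {K ι : Type*} [Field K] [CharZero K] [Fintype ι] [DecidableEq ι]
    {z : ι → K} (hz : Function.Injective z)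
    (hcrit : ∀ i, 2 * (derivative (∏ j ∈ {i}ᶜ, (X - C (z j)))).eval (z i) =
      z i * (∏ j ∈ {i}ᶜ, (X - C (z j))).eval (z i)) :
    ∏ j, (X - C (z j)) = (hermite (Fintype.card ι)).map (Int.castRingHom K) := by
  have hdeg : (∏ j, (X - C (z j))).natDegree = Fintype.card ι :=
    natDegree_finsetProd_X_sub_C_eq_card _ _
  refine eq_hermite_of_hermiteOp_eq_zero (monic_prod_of_monic _ _ fun j _ => monic_X_sub_C _)
    hdeg ?_
  refine eq_zero_of_degree_lt_of_eval_index_eq_zero univ hz.injOn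
    (degree_hermiteOp_lt hdeg.le) fun i _ => ?_
  rw [Fintype.prod_eq_mul_prod_compl i, eval_hermiteOp_X_sub_C_mul, hcrit, sub_self]

end Polynomial

section Weight

variable {ι : Type*} [Fintype ι]

theorem sq_le_sum_sq (x : ι → ℝ) (i : ι) : x i ^ 2 ≤ ∑ k, x k ^ 2 :=
  single_le_sum (fun k _ => sq_nonneg (x k)) (mem_univ i)

theorem tendsto_sum_sq_cocompact :
    Tendsto (fun x : ι → ℝ => ∑ i, x i ^ 2) (cocompact _) atTop := by
  refine tendsto_atTop_mono (fun x => ?_)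
    (tendsto_atTop_add_const_right _ (-1) tendsto_norm_cocompact_atTop)
  have hnorm : ‖x‖ ≤ ∑ k, x k ^ 2 + 1 :=
    (pi_norm_le_iff_of_nonneg (by positivity)).2 fun i => by
      rw [Real.norm_eq_abs]
      nlinarith [abs_mul_abs_self (x i), abs_nonneg (x i), sq_le_sum_sq x i]
  linarith

variable [DecidableEq ι]

/-- For `x` with distinct coordinates this is `exp (-4 * logEnergy x)`; unlike the energy it is
continuous on all tuples. -/
noncomputable def stieltjesWeight (x : ι → ℝ) : ℝ :=
  (∏ i, ∏ j ∈ {i}ᶜ, (x i - x j) ^ 2) * exp (-∑ i, x i ^ 2)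

theorem continuous_stieltjesWeight : Continuous (stieltjesWeight (ι := ι)) := by
  unfold stieltjesWeight
  fun_prop

theorem stieltjesWeight_nonneg (x : ι → ℝ) : 0 ≤ stieltjesWeight x := by
  unfold stieltjesWeight
  positivity

theorem stieltjesWeight_pos_iff {x : ι → ℝ} :
    0 < stieltjesWeight x ↔ Function.Injective x := by
  rw [stieltjesWeight, mul_pos_iff_of_pos_right (exp_pos _)]
  constructor
  · intro h i j hij
    by_contra hne
    exact h.ne' (prod_eq_zero (mem_univ i) (prod_eq_zero (i := j) (by simpa [eq_comm] using hne)
      (by simp [hij])))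
  · intro hx
    refine prod_pos fun i _ => prod_pos fun j hj => ?_
    have : x i - x j ≠ 0 := sub_ne_zero.2 (hx.ne (by simpa [eq_comm] using hj))
    positivity

theorem stieltjesWeight_le (x : ι → ℝ) :
    stieltjesWeight x ≤
      (4 * ∑ i, x i ^ 2) ^ ((Fintype.card ι - 1) * Fintype.card ι) * exp (-∑ i, x i ^ 2) := by
  refine mul_le_mul_of_nonneg_right ?_ (exp_pos _).le
  calc ∏ i, ∏ j ∈ {i}ᶜ, (x i - x j) ^ 2
      ≤ ∏ i : ι, ∏ j ∈ ({i}ᶜ : Finset ι), 4 * ∑ k, x k ^ 2 := by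
        gcongr with i _ j _
        nlinarith [sq_le_sum_sq x i, sq_le_sum_sq x j, sq_nonneg (x i + x j)]
    _ = _ := by simp [card_compl, ← pow_mul]

theorem tendsto_stieltjesWeight_cocompact :
    Tendsto (stieltjesWeight (ι := ι)) (cocompact _) (𝓝 0) := by
  have hφ : Tendsto (fun s : ℝ => (4 * s) ^ ((Fintype.card ι - 1) * Fintype.card ι) * exp (-s))
      atTop (𝓝 0) := by
    simpa [mul_pow, mul_assoc] using
      (tendsto_pow_mul_exp_neg_atTop_nhds_zero ((Fintype.card ι - 1) * Fintype.card ι)).const_mul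
        (4 ^ ((Fintype.card ι - 1) * Fintype.card ι))
  exact tendsto_of_tendsto_of_tendsto_of_le_of_le tendsto_const_nhds
    (hφ.comp tendsto_sum_sq_cocompact) stieltjesWeight_nonneg stieltjesWeight_le

theorem exists_forall_stieltjesWeight_le :
    ∃ z : ι → ℝ, ∀ y : ι → ℝ, stieltjesWeight y ≤ stieltjesWeight z := by
  by_cases h : ∃ x₀, 0 < stieltjesWeight (ι := ι) x₀
  · obtain ⟨x₀, hx₀⟩ := h
    exact continuous_stieltjesWeight.exists_forall_ge' x₀
      ((tendsto_order.1 tendsto_stieltjesWeight_cocompact).2 _ hx₀ |>.mono fun _ => le_of_lt)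
  · push Not at h
    exact ⟨0, fun y => (h y).trans (stieltjesWeight_nonneg 0)⟩

theorem stieltjesWeight_comp_perm (x : ι → ℝ) (σ : Equiv.Perm ι) :
    stieltjesWeight (x ∘ σ) = stieltjesWeight x := by
  have hrow (i : ι) : ∏ j ∈ {i}ᶜ, (x (σ i) - x (σ j)) ^ 2 = ∏ j ∈ {σ i}ᶜ, (x (σ i) - x j) ^ 2 :=
    prod_equiv σ (by simp) (by simp)
  simp only [stieltjesWeight, Function.comp_apply, hrow,
    Equiv.prod_comp σ fun i => ∏ j ∈ {i}ᶜ, (x i - x j) ^ 2, Equiv.sum_comp σ fun i => x i ^ 2]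

theorem stieltjesWeight_update (x : ι → ℝ) (i : ι) : ∃ c, ∀ t,
    stieltjesWeight (Function.update x i t) = c * ((∏ j ∈ {i}ᶜ, (t - x j)) ^ 4 * exp (-t ^ 2)) := by
  refine ⟨(∏ a ∈ {i}ᶜ, ∏ b ∈ ({a}ᶜ : Finset ι).erase i, (x a - x b) ^ 2) *
    exp (-∑ a ∈ {i}ᶜ, x a ^ 2), fun t => ?_⟩
  have hupd (a : ι) (ha : a ∈ ({i}ᶜ : Finset ι)) : Function.update x i t a = x a :=
    Function.update_of_ne (by simpa using ha) _ _
  have hrow (a : ι) (ha : a ∈ ({i}ᶜ : Finset ι)) :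
      ∏ b ∈ {a}ᶜ, (Function.update x i t a - Function.update x i t b) ^ 2 =
        (t - x a) ^ 2 * ∏ b ∈ ({a}ᶜ : Finset ι).erase i, (x a - x b) ^ 2 := by
    have hia : i ∈ ({a}ᶜ : Finset ι) := by simpa [eq_comm] using ha
    rw [← mul_prod_erase _ _ hia, hupd a ha, Function.update_self,
      prod_congr rfl fun b hb => by rw [Function.update_of_ne (ne_of_mem_erase hb)]]
    ring
  rw [stieltjesWeight, Fintype.prod_eq_mul_prod_compl i, Fintype.sum_eq_add_sum_compl i,
    prod_congr rfl hrow, prod_mul_distrib, sum_congr rfl fun a ha => by rw [hupd a ha],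
    prod_congr rfl fun b hb => by rw [Function.update_self, hupd b hb]]
  rw [Function.update_self, neg_add, exp_add, prod_pow]
  ring

theorem stieltjesWeight_critical {z : ι → ℝ} (hmax : IsLocalMax stieltjesWeight z)
    (hz : Function.Injective z) (i : ι) :
    2 * (derivative (∏ j ∈ {i}ᶜ, (X - C (z j)))).eval (z i) =
      z i * (∏ j ∈ {i}ᶜ, (X - C (z j))).eval (z i) := by
  set q : ℝ[X] := ∏ j ∈ {i}ᶜ, (X - C (z j))
  obtain ⟨c, hc⟩ := stieltjesWeight_update z i
  have hq (t : ℝ) : ∏ j ∈ {i}ᶜ, (t - z j) = q.eval t := by simp [q, eval_prod]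
  simp only [hq] at hc
  have hslice : IsLocalMax (fun t => c * (q.eval t ^ 4 * exp (-t ^ 2))) (z i) := by
    have hmax' : IsLocalMax stieltjesWeight (Function.update z i (z i)) := by
      rwa [Function.update_eq_self]
    simpa only [Function.comp_def, hc] using hmax'.comp_continuous (by fun_prop)
  have hderiv : HasDerivAt (fun t => c * (q.eval t ^ 4 * exp (-t ^ 2)))
      (c * (4 * q.eval (z i) ^ 3 * (derivative q).eval (z i) * exp (-z i ^ 2) +
        q.eval (z i) ^ 4 * (exp (-z i ^ 2) * -(2 * z i)))) (z i) := by
    have hexp : HasDerivAt (fun t : ℝ => -t ^ 2) (-(2 * z i)) (z i) := by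
      simpa using (hasDerivAt_pow 2 (z i)).fun_neg
    simpa using (((q.hasDerivAt (z i)).pow 4).mul hexp.exp).const_mul c
  have hpos : 0 < c * (q.eval (z i) ^ 4 * exp (-z i ^ 2)) := by
    rw [← hc, Function.update_eq_self]
    exact stieltjesWeight_pos_iff.2 hz
  obtain ⟨hc0, hq0⟩ : c ≠ 0 ∧ q.eval (z i) ≠ 0 := by
    constructor <;> rintro h <;> simp [h] at hpos
  have hfactor : c * q.eval (z i) ^ 3 * exp (-z i ^ 2) *
      (2 * (2 * (derivative q).eval (z i) - z i * q.eval (z i))) = 0 := by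
    linear_combination hslice.hasDerivAt_eq_zero hderiv
  have hne : c * q.eval (z i) ^ 3 * exp (-z i ^ 2) ≠ 0 := by positivity
  linarith [(mul_eq_zero.1 hfactor).resolve_left hne]

theorem aeval_hermite_eq_zero_of_isLocalMax {z : ι → ℝ} (hmax : IsLocalMax stieltjesWeight z)
    (hz : Function.Injective z) (i : ι) : aeval (z i) (hermite (Fintype.card ι)) = 0 := by
  rw [aeval_def, ← eval_map, algebraMap_int_eq,
    ← prod_X_sub_C_eq_hermite hz (stieltjesWeight_critical hmax hz), eval_prod]
  exact prod_eq_zero (mem_univ i) (by simp)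

end Weight

section Energy

variable {ι : Type*} [Fintype ι] [LinearOrder ι] [LocallyFiniteOrderTop ι]

noncomputable def logEnergy (x : ι → ℝ) : ℝ :=
  (∑ i, ∑ j ∈ Ioi i, log (1 / |x i - x j|)) + 1 / 4 * ∑ i, x i ^ 2

theorem log_stieltjesWeight [LocallyFiniteOrderBot ι] {x : ι → ℝ} (hx : Function.Injective x) :
    log (stieltjesWeight x) = -4 * logEnergy x := by
  have hne {i j : ι} (hij : i < j) : |x i - x j| ≠ 0 := abs_ne_zero.2 (sub_ne_zero.2 (hx.ne hij.ne))
  have hpairs : ∏ i, ∏ j ∈ {i}ᶜ, (x i - x j) ^ 2 = ∏ i, ∏ j ∈ Ioi i, |x i - x j| ^ 4 := by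
    rw [← prod_prod_Ioi_mul_eq_prod_prod_off_diag fun a b => (x b - x a) ^ 2]
    refine prod_congr rfl fun i _ => prod_congr rfl fun j _ => ?_
    rw [show |x i - x j| ^ 4 = (|x i - x j| ^ 2) ^ 2 by ring, sq_abs]
    ring
  have hrow (i : ι) : ∏ j ∈ Ioi i, |x i - x j| ^ 4 ≠ 0 :=
    prod_ne_zero_iff.2 fun j hj => pow_ne_zero _ (hne (mem_Ioi.1 hj))
  rw [stieltjesWeight, hpairs, log_mul (prod_ne_zero_iff.2 fun i _ => hrow i) (exp_pos _).ne',
    log_exp, log_prod fun i _ => hrow i, logEnergy]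
  simp only [log_prod fun j hj => pow_ne_zero _ (hne (mem_Ioi.1 hj)), log_pow, one_div, log_inv,
    sum_neg_distrib, ← mul_sum]
  push_cast
  ring

end Energy

theorem exists_perm_comp_eq {ι α : Type*} [Finite ι] {z r : ι → α} (hz : Function.Injective z)
    (h : ∀ i, ∃ j, z i = r j) : ∃ σ : Equiv.Perm ι, r ∘ σ = z := by
  choose σ hσ using h
  have hσ_inj : Function.Injective σ := fun a b hab => hz (by rw [hσ a, hσ b, hab])
  exact ⟨Equiv.ofBijective σ (Finite.injective_iff_bijective.1 hσ_inj), funext fun i => (hσ i).symm⟩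

theorem hermite_roots_minimize_energy_general (n : ℕ)
    (r : Fin n → ℝ)
    (hall : ∀ t : ℝ, Polynomial.aeval t (Polynomial.hermite n) = 0 → ∃ i : Fin n, t = r i) :
    ∀ y : Fin n → ℝ, Function.Injective y →
      (∑ i : Fin n, ∑ j ∈ Finset.Ioi i, Real.log (1 / |r i - r j|)) +
          (1 / 4) * ∑ i : Fin n, (r i) ^ 2 ≤
        (∑ i : Fin n, ∑ j ∈ Finset.Ioi i, Real.log (1 / |y i - y j|)) +
          (1 / 4) * ∑ i : Fin n, (y i) ^ 2 := by
  intro y hy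
  obtain ⟨z, hz⟩ := exists_forall_stieltjesWeight_le (ι := Fin n)
  have hz_inj : Function.Injective z :=
    stieltjesWeight_pos_iff.1 ((stieltjesWeight_pos_iff.2 hy).trans_le (hz y))
  have hroot (i : Fin n) : aeval (z i) (hermite n) = 0 := by
    simpa using aeval_hermite_eq_zero_of_isLocalMax (Eventually.of_forall hz) hz_inj i
  obtain ⟨σ, rfl⟩ := exists_perm_comp_eq hz_inj fun i => hall _ (hroot i)
  have hr : Function.Injective r := hz_inj.of_comp_right σ.surjective
  have hle : log (stieltjesWeight y) ≤ log (stieltjesWeight r) := by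
    rw [← stieltjesWeight_comp_perm r σ]
    exact log_le_log (stieltjesWeight_pos_iff.2 hy) (hz y)
  rw [log_stieltjesWeight hy, log_stieltjesWeight hr] at hle
  change logEnergy r ≤ logEnergy y
  linarith

/-- **Stieltjes' electrostatic characterization of Hermite zeros.**
For `n ≥ 2`, the tuple of the `n` distinct real roots of the probabilist Hermite
polynomial `He_n` globally minimizes the energy
`E(x) = ∑_{i<j} log(1/|x_i - x_j|) + (1/4) ∑_i x_i²`
over all tuples of pairwise distinct real numbers. -/
theorem hermite_roots_minimize_energy (n : ℕ) (hn : 2 ≤ n)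
    (r : Fin n → ℝ) (hmono : StrictMono r)
    (hroot : ∀ i : Fin n, Polynomial.aeval (r i) (Polynomial.hermite n) = 0)
    (hall : ∀ t : ℝ, Polynomial.aeval t (Polynomial.hermite n) = 0 → ∃ i : Fin n, t = r i) :
    ∀ y : Fin n → ℝ, Function.Injective y →
      (∑ i : Fin n, ∑ j ∈ Finset.Ioi i, Real.log (1 / |r i - r j|)) +
          (1 / 4) * ∑ i : Fin n, (r i) ^ 2 ≤
        (∑ i : Fin n, ∑ j ∈ Finset.Ioi i, Real.log (1 / |y i - y j|)) +
          (1 / 4) * ∑ i : Fin n, (y i) ^ 2 :=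
  hermite_roots_minimize_energy_general n r hall
end

section
/- Let w : ℝ → ℝ be a measurable function with w(x) ≥ 0 for all x and ∫ |x|^k w(x) dx < ∞ for every integer k ≥ 0, and let p be a real polynomial of degree n such that ∫ x^j·p(x)·w(x) dx = 0 for every integer 0 ≤ j ≤ n − 1. Then the Cauchy transform along the imaginary axis decays at rate n+1: the function y ↦ ∫_{ℝ} p(s)·w(s)/(s − i·y) ds (a complex-valued integral) satisfies |∫ p(s)w(s)/(s − i y) ds| ≤ C·y^{−(n+1)} for some constant C and all sufficiently large y > 0. -/
open Polynomial MeasureTheory Complex Finset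

lemma aux_int (w : ℝ → ℝ) (hmeas : Measurable w) (hnonneg : ∀ x, 0 ≤ w x)
    (hmom : ∀ k : ℕ, Integrable (fun x : ℝ => |x| ^ k * w x))
    (p : Polynomial ℝ) (m : ℕ) :
    Integrable (fun x : ℝ => |x| ^ m * (|p.eval x| * w x)) := by
  set d := p.natDegree
  have hg : Integrable (fun x : ℝ =>
      ∑ k ∈ Finset.range (d+1), |p.coeff k| * (|x| ^ (m+k) * w x)) := by
    exact integrable_finset_sum _ (fun k _ => (hmom (m+k)).const_mul _)
  refine hg.mono' ?_ ?_
  · apply Measurable.aestronglyMeasurable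
    exact ((measurable_abs.pow_const m).mul
      ((p.continuous_aeval.measurable.comp measurable_id).abs.mul hmeas))
  · filter_upwards with x
    have hev : |p.eval x| ≤ ∑ k ∈ Finset.range (d+1), |p.coeff k| * |x| ^ k := by
      conv_lhs => rw [Polynomial.eval_eq_sum_range]
      refine (Finset.abs_sum_le_sum_abs _ _).trans ?_
      refine Finset.sum_le_sum fun k _ => ?_
      rw [_root_.abs_mul, _root_.abs_pow]
    have h0 : ‖|x| ^ m * (|p.eval x| * w x)‖ = |x| ^ m * (|p.eval x| * w x) := by
      rw [Real.norm_eq_abs, _root_.abs_of_nonneg]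
      exact mul_nonneg (by positivity) (mul_nonneg (abs_nonneg _) (hnonneg x))
    rw [h0]
    calc |x| ^ m * (|p.eval x| * w x)
        ≤ |x| ^ m * ((∑ k ∈ Finset.range (d+1), |p.coeff k| * |x| ^ k) * w x) := by
          have := hnonneg x
          have h1 : (0:ℝ) ≤ |x| ^ m := by positivity
          nlinarith [mul_le_mul_of_nonneg_right hev this, abs_nonneg (p.eval x)]
      _ = ∑ k ∈ Finset.range (d+1), |p.coeff k| * (|x| ^ (m+k) * w x) := by
          rw [Finset.sum_mul, Finset.mul_sum]
          refine Finset.sum_congr rfl fun k _ => ?_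
          rw [pow_add]; ring

/-- **Decay of the Cauchy transform of an orthogonal polynomial.**
Let `w ≥ 0` be a measurable weight on `ℝ` with all moments finite and let `p` be a
real polynomial of degree `n` with `∫ x^j p(x) w(x) dx = 0` for `0 ≤ j ≤ n - 1`.
Then the Cauchy-type transform along the imaginary axis decays at rate `n + 1`:
`|∫ p(s) w(s)/(s - i y) ds| ≤ C y^{-(n+1)}` for some `C` and all large `y > 0`. -/
theorem cauchy_transform_orthogonal_decay
    (w : ℝ → ℝ) (hmeas : Measurable w) (hnonneg : ∀ x, 0 ≤ w x)
    (hmom : ∀ k : ℕ, Integrable (fun x : ℝ => |x| ^ k * w x))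
    (n : ℕ) (p : Polynomial ℝ) (hdeg : p.natDegree = n)
    (horth : ∀ j : ℕ, j < n → ∫ x : ℝ, x ^ j * Polynomial.eval x p * w x = 0) :
    ∃ C : ℝ, ∃ Y : ℝ, 0 < Y ∧ ∀ y : ℝ, Y ≤ y →
      ‖∫ s : ℝ, ((Polynomial.eval s p * w s : ℝ) : ℂ) / ((s : ℂ) - Complex.I * (y : ℂ))‖ ≤
        C / y ^ (n + 1) := by
  have haux := aux_int w hmeas hnonneg hmom p
  refine ⟨∫ x : ℝ, |x| ^ n * (|p.eval x| * w x), 1, one_pos, ?_⟩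
  intro y hy
  have hy0 : (0:ℝ) < y := lt_of_lt_of_le one_pos hy
  obtain ⟨z, hz⟩ : ∃ z : ℂ, z = Complex.I * (y : ℂ) := ⟨_, rfl⟩
  rw [show (∫ s : ℝ, ((Polynomial.eval s p * w s : ℝ) : ℂ) / ((s : ℂ) - Complex.I * (y : ℂ)))
      = ∫ s : ℝ, ((Polynomial.eval s p * w s : ℝ) : ℂ) / ((s : ℂ) - z) from by rw [hz]]
  have hzabs : ‖z‖ = y := by
    simp [hz, norm_mul, _root_.abs_of_pos hy0]
  have hz0 : z ≠ 0 := by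
    intro h; rw [h, norm_zero] at hzabs; linarith
  have hsz : ∀ s : ℝ, (s:ℂ) - z ≠ 0 := by
    intro s h
    have him := congrArg Complex.im h
    simp [hz] at him
    linarith
  have hnorm_sz : ∀ s : ℝ, y ≤ ‖(s:ℂ) - z‖ := by
    intro s
    have h1 : |((s:ℂ) - z).im| ≤ ‖(s:ℂ) - z‖ := Complex.abs_im_le_norm _
    have h2 : ((s:ℂ) - z).im = -y := by simp [hz]
    rw [h2, abs_neg, _root_.abs_of_pos hy0] at h1
    exact h1
  set a : ℝ → ℂ := fun s => ((p.eval s * w s : ℝ) : ℂ) with ha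
  have hameas : Measurable a :=
    Complex.measurable_ofReal.comp (p.continuous_aeval.measurable.mul hmeas)
  have hanorm : ∀ s : ℝ, ‖a s‖ = |p.eval s| * w s := by
    intro s
    simp only [ha, Complex.norm_real, Real.norm_eq_abs, _root_.abs_mul]
    rw [_root_.abs_of_nonneg (hnonneg s)]
  set F : ℝ → ℂ := fun s => a s / ((s:ℂ) - z) with hF
  set G : ℝ → ℂ := fun s => a s * (s:ℂ)^n / (z^n * ((s:ℂ) - z)) with hG
  set T : ℕ → ℝ → ℂ := fun j s => a s * (s:ℂ)^j / z^(j+1) with hT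
  have hy1 : ∀ m : ℕ, (1:ℝ) ≤ y ^ m := fun m => one_le_pow₀ hy
  -- integrabilities
  have hintF : Integrable F := by
    refine (haux 0).mono' ?_ ?_
    · exact (hameas.div (Complex.measurable_ofReal.sub_const z)).aestronglyMeasurable
    · filter_upwards with s
      rw [hF]
      simp only [norm_div, hanorm, pow_zero, one_mul]
      exact div_le_self (mul_nonneg (abs_nonneg _) (hnonneg s)) (le_trans hy (hnorm_sz s))
  have hintG : Integrable G := by
    refine (haux n).mono' ?_ ?_
    · exact ((hameas.mul (Complex.measurable_ofReal.pow_const n)).div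
        (measurable_const.mul (Complex.measurable_ofReal.sub_const z))).aestronglyMeasurable
    · filter_upwards with s
      rw [hG]
      simp only [norm_div, norm_mul, norm_pow, hanorm, hzabs, Complex.norm_real,
        Real.norm_eq_abs]
      have h1 : (1:ℝ) ≤ y ^ n * ‖(s:ℂ) - z‖ := by
        have := hy1 n
        have h2 := le_trans hy (hnorm_sz s)
        nlinarith
      refine (div_le_self (mul_nonneg (mul_nonneg (abs_nonneg _) (hnonneg s)) (by positivity)) h1).trans_eq (by ring)
  have hintT : ∀ j : ℕ, Integrable (T j) := by
    intro j
    refine (haux j).mono' ?_ ?_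
    · exact ((hameas.mul (Complex.measurable_ofReal.pow_const j)).div_const _).aestronglyMeasurable
    · filter_upwards with s
      rw [hT]
      simp only [norm_div, norm_mul, norm_pow, hanorm, hzabs, Complex.norm_real,
        Real.norm_eq_abs]
      refine (div_le_self (mul_nonneg (mul_nonneg (abs_nonneg _) (hnonneg s)) (by positivity)) (hy1 (j+1))).trans_eq (by ring)
  -- pointwise identity
  have hkey : ∀ s : ℝ, G s - F s = ∑ j ∈ Finset.range n, T j s := by
    intro s
    have hS : (∑ i ∈ Finset.range n, (s:ℂ)^i * z^(n-1-i)) * ((s:ℂ) - z)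
        = (s:ℂ)^n - z^n := geom_sum₂_mul _ _ n
    have hzn : z^n ≠ 0 := pow_ne_zero _ hz0
    have hsum : ∑ j ∈ Finset.range n, T j s
        = a s * (∑ i ∈ Finset.range n, (s:ℂ)^i * z^(n-1-i)) / z^n := by
      rw [Finset.mul_sum, Finset.sum_div]
      refine Finset.sum_congr rfl fun j hj => ?_
      have hj' : j < n := Finset.mem_range.mp hj
      have hpow : z^(j+1) * z^(n-1-j) = z^n := by
        rw [← pow_add]; congr 1; omega
      rw [hT]
      rw [div_eq_div_iff (pow_ne_zero _ hz0) hzn, ← hpow]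
      ring
    rw [hsum, hG, hF]
    rw [div_sub_div _ _ (mul_ne_zero hzn (hsz s)) (hsz s),
      div_eq_div_iff (mul_ne_zero (mul_ne_zero hzn (hsz s)) (hsz s)) hzn]
    linear_combination (-(a s * z^n * ((s:ℂ) - z))) * hS
  -- integral of each T j is zero
  have hTzero : ∀ j : ℕ, j < n → ∫ s : ℝ, T j s = 0 := by
    intro j hj
    have hTeq : (fun s : ℝ => T j s) = fun s : ℝ =>
        ((s ^ j * p.eval s * w s : ℝ) : ℂ) / z^(j+1) := by
      funext s; rw [hT, ha]; push_cast; ring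
    rw [hTeq, integral_div]
    have hco : (∫ s : ℝ, ((s ^ j * p.eval s * w s : ℝ) : ℂ))
        = ((∫ s : ℝ, s ^ j * p.eval s * w s : ℝ) : ℂ) := integral_ofReal
    rw [hco, horth j hj]
    simp
  -- conclude ∫ F = ∫ G
  have hFG : ∫ s : ℝ, F s = ∫ s : ℝ, G s := by
    have h1 : ∫ s : ℝ, (G s - F s) = 0 := by
      have h2 : ∫ s : ℝ, (G s - F s) = ∫ s : ℝ, ∑ j ∈ Finset.range n, T j s := by
        congr 1; funext s; exact hkey s
      rw [h2, integral_finset_sum _ (fun j _ => hintT j)]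
      exact Finset.sum_eq_zero fun j hj => hTzero j (Finset.mem_range.mp hj)
    rw [integral_sub hintG hintF] at h1
    exact (sub_eq_zero.mp h1).symm
  have hgoal : (∫ s : ℝ, ((Polynomial.eval s p * w s : ℝ) : ℂ) /
      ((s : ℂ) - z)) = ∫ s : ℝ, F s := rfl
  rw [hgoal, hFG]
  have hbd : Integrable (fun s : ℝ => (|s| ^ n * (|p.eval s| * w s)) / y ^ (n+1)) :=
    (haux n).div_const _
  refine le_trans (norm_integral_le_of_norm_le hbd ?_) ?_
  · filter_upwards with s
    rw [hG]
    simp only [norm_div, norm_mul, norm_pow, hanorm, hzabs, Complex.norm_real,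
      Real.norm_eq_abs]
    have hnum : |p.eval s| * w s * |s| ^ n = |s| ^ n * (|p.eval s| * w s) := by ring
    rw [hnum]
    apply div_le_div_of_nonneg_left
    · exact mul_nonneg (by positivity) (mul_nonneg (abs_nonneg _) (hnonneg s))
    · positivity
    · rw [pow_succ]
      have h3 := hnorm_sz s
      have h4 : (0:ℝ) ≤ y ^ n := by positivity
      nlinarith
  · rw [integral_div]
end

section
/- Let V : ℝ → ℝ, let x_1, …, x_n be distinct real numbers with Lagrange basis polynomials ℓ_j, and define Λ_n(x) = Σ_{j=1}^{n} |ℓ_j(x)|·e^{(V(x_j) − V(x))/2}. Let f, Δf : ℝ → ℝ and x ∈ ℝ satisfy: f(x) ≠ 0, |Σ_j f(x_j) ℓ_j(x)| ≥ |f(x)|/2, the quantity S = sup_{y ∈ ℝ} |f(y)|·e^{−V(y)/2} is finite, and |Δf(y)| ≤ |f(y)| for all y ∈ ℝ. Then |Σ_{j=1}^{n} Δf(x_j)·ℓ_j(x)| / |Σ_{j=1}^{n} f(x_j)·ℓ_j(x)| ≤ 2·S·Λ_n(x)·e^{V(x)/2} / |f(x)|. -/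
open Polynomial Finset Lagrange Real

/-- **Bound on the weighted interpolation condition number.**
Let `V : ℝ → ℝ`, let `x 0, …, x (n-1)` be distinct nodes with Lagrange basis `ℓ j`,
and `Λ(t) = ∑ j, |ℓ j (t)| e^{(V(x j) - V(t))/2}`.  Suppose `f(t) ≠ 0`,
`|L_n[f](t)| ≥ |f(t)|/2`, `S = sup_y |f(y)| e^{-V(y)/2}` is finite, and
`|Δf(y)| ≤ |f(y)|` for all `y`.  Then
`|L_n[Δf](t)| / |L_n[f](t)| ≤ 2 S Λ(t) e^{V(t)/2} / |f(t)|`. -/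
theorem weighted_condition_number_bound (n : ℕ)
    (V : ℝ → ℝ) (x : Fin n → ℝ) (hinj : Function.Injective x)
    (f Δf : ℝ → ℝ) (t : ℝ)
    (hft : f t ≠ 0)
    (hLf : |f t| / 2 ≤
      |∑ j : Fin n, f (x j) * Polynomial.eval t (Lagrange.basis Finset.univ x j)|)
    (hbdd : BddAbove (Set.range fun y : ℝ => |f y| * Real.exp (-V y / 2)))
    (hΔ : ∀ y : ℝ, |Δf y| ≤ |f y|) :
    |∑ j : Fin n, Δf (x j) * Polynomial.eval t (Lagrange.basis Finset.univ x j)| /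
        |∑ j : Fin n, f (x j) * Polynomial.eval t (Lagrange.basis Finset.univ x j)| ≤
      2 * (⨆ y : ℝ, |f y| * Real.exp (-V y / 2)) *
          (∑ j : Fin n, |Polynomial.eval t (Lagrange.basis Finset.univ x j)| *
            Real.exp ((V (x j) - V t) / 2)) *
          Real.exp (V t / 2) / |f t| := by
  set S : ℝ := ⨆ y : ℝ, |f y| * Real.exp (-V y / 2) with hS
  set ℓ : Fin n → ℝ := fun j => Polynomial.eval t (Lagrange.basis Finset.univ x j)
  have hSle : ∀ y : ℝ, |f y| ≤ S * Real.exp (V y / 2) := by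
    intro y
    have h1 : |f y| * Real.exp (-V y / 2) ≤ S :=
      le_ciSup hbdd y
    have h2 : |f y| = (|f y| * Real.exp (-V y / 2)) * Real.exp (V y / 2) := by
      rw [mul_assoc, ← Real.exp_add]
      ring_nf
      simp
    rw [h2]
    exact mul_le_mul_of_nonneg_right h1 (Real.exp_pos _).le
  have hft' : 0 < |f t| := abs_pos.mpr hft
  have hD : 0 < |∑ j : Fin n, f (x j) * ℓ j| := lt_of_lt_of_le (by positivity) hLf
  have hnum : |∑ j : Fin n, Δf (x j) * ℓ j| ≤
      S * (∑ j : Fin n, |ℓ j| * Real.exp ((V (x j) - V t) / 2)) * Real.exp (V t / 2) := by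
    calc |∑ j : Fin n, Δf (x j) * ℓ j| ≤ ∑ j : Fin n, |Δf (x j) * ℓ j| :=
          Finset.abs_sum_le_sum_abs _ _
      _ ≤ ∑ j : Fin n, S * Real.exp (V (x j) / 2) * |ℓ j| := by
          apply Finset.sum_le_sum
          intro j _
          rw [abs_mul]
          exact mul_le_mul_of_nonneg_right ((hΔ _).trans (hSle _)) (abs_nonneg _)
      _ = S * (∑ j : Fin n, |ℓ j| * Real.exp ((V (x j) - V t) / 2)) * Real.exp (V t / 2) := by
          rw [mul_assoc, Finset.sum_mul, Finset.mul_sum]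
          apply Finset.sum_congr rfl
          intro j _
          rw [mul_assoc, mul_assoc, ← Real.exp_add]
          ring_nf
  have hΛnn : 0 ≤ ∑ j : Fin n, |ℓ j| * Real.exp ((V (x j) - V t) / 2) :=
    Finset.sum_nonneg fun j _ => mul_nonneg (abs_nonneg _) (Real.exp_pos _).le
  have hSnn : 0 ≤ S := le_trans (by positivity) (le_ciSup hbdd t)
  calc |∑ j : Fin n, Δf (x j) * ℓ j| / |∑ j : Fin n, f (x j) * ℓ j|
      ≤ (S * (∑ j : Fin n, |ℓ j| * Real.exp ((V (x j) - V t) / 2)) * Real.exp (V t / 2)) /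
        (|f t| / 2) := by
        apply div_le_div₀ (by positivity) hnum (by positivity) hLf
    _ = 2 * S * (∑ j : Fin n, |ℓ j| * Real.exp ((V (x j) - V t) / 2)) *
          Real.exp (V t / 2) / |f t| := by ring
end
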